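/- In the setting of Case 2a (n+α even, σ + 1/2 ∈ ℤ, σ̃ = σ + (n+α+1)/2 odd), for every 0 ≤ i ≤ k = ⌊n/2⌋ the set L_{i,i} is nonempty, and whenever (j+1, j) ∈ S(n) the set L_{j+1,j} is nonempty. -/

import Mathlib

/-- Membership of 2λ in L_{i,j} (Case 2a): λ ∈ Λ⁺_n (weakly decreasing on 1..n) and
2λ_{2i-1} ≥ B⁻_{2i-1} ≥ 2λ_{2i+1}, 2λ_{2j} ≥ B⁺_{2j+2} ≥ 2λ_{2j+2}, where
B⁻_{2i-1} = σ - (n+α)/2 + 2i - 1/2, B⁺_{2j+2} = -σ - (n+α)/2 + 2j + 1/2,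
with conventions 2λ_0 = +∞, 2λ_{n+1} = -∞ (out-of-range conditions vacuous). -/
def LMem (n α : ℤ) (σ : ℝ) (i j : ℤ) (lam : ℤ → ℤ) : Prop :=
  (∀ a b : ℤ, 1 ≤ a → a ≤ b → b ≤ n → lam b ≤ lam a) ∧
  ((1 ≤ 2 * i - 1 ∧ 2 * i - 1 ≤ n) →
    σ - ((n : ℝ) + α) / 2 + 2 * i - 1 / 2 ≤ 2 * lam (2 * i - 1)) ∧
  ((1 ≤ 2 * i + 1 ∧ 2 * i + 1 ≤ n) →
    (2 * lam (2 * i + 1) : ℝ) ≤ σ - ((n : ℝ) + α) / 2 + 2 * i - 1 / 2) ∧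
  ((1 ≤ 2 * j ∧ 2 * j ≤ n) →
    -σ - ((n : ℝ) + α) / 2 + 2 * j + 1 / 2 ≤ 2 * lam (2 * j)) ∧
  ((1 ≤ 2 * j + 2 ∧ 2 * j + 2 ≤ n) →
    (2 * lam (2 * j + 2) : ℝ) ≤ -σ - ((n : ℝ) + α) / 2 + 2 * j + 1 / 2)

/-!
In Case 2a both bounds are even integers: writing `n + α = 2d` and `t = 2u + 1`, one finds
`B⁻_{2i-1} = 2(u - d + i)` and `B⁺_{2j+2} = 2(j - u)`. A weight that is constant equal to the
larger of the two halved bounds up to a cut index and to the smaller one after it satisfies all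
four inequalities, provided the cut lies in `[2i-1, 2i+1)` and in `[2j, 2j+2)`: take the cut `2i`
for `L_{i,i}` and `2j+1` for `L_{j+1,j}`.
-/

def stepSeq (c hi lo : ℤ) (x : ℤ) : ℤ := if x ≤ c then hi else lo

lemma stepSeq_antitone {c hi lo : ℤ} (h : lo ≤ hi) : Antitone (stepSeq c hi lo) := by
  intro a b hab
  unfold stepSeq
  split_ifs <;> omega

lemma stepSeq_of_le {c hi lo x : ℤ} (hx : x ≤ c) : stepSeq c hi lo x = hi := if_pos hx

lemma stepSeq_of_lt {c hi lo x : ℤ} (hx : c < x) : stepSeq c hi lo x = lo :=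
  if_neg (not_le.mpr hx)

lemma lMem_stepSeq {n α i j c e e' : ℤ} {σ : ℝ}
    (he : σ - ((n : ℝ) + α) / 2 - 1 / 2 = 2 * e)
    (he' : -σ - ((n : ℝ) + α) / 2 + 1 / 2 = 2 * e')
    (hci : 2 * i - 1 ≤ c ∧ c < 2 * i + 1) (hcj : 2 * j ≤ c ∧ c < 2 * j + 2) :
    LMem n α σ i j (stepSeq c (max (e + i) (e' + j)) (min (e + i) (e' + j))) := by
  have hB : σ - ((n : ℝ) + α) / 2 + 2 * i - 1 / 2 = ((2 * (e + i) : ℤ) : ℝ) := by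
    push_cast; linarith
  have hB' : -σ - ((n : ℝ) + α) / 2 + 2 * j + 1 / 2 = ((2 * (e' + j) : ℤ) : ℝ) := by
    push_cast; linarith
  refine ⟨fun a b _ hab _ => stepSeq_antitone min_le_max hab, ?_, ?_, ?_, ?_⟩
  · intro _
    rw [hB, stepSeq_of_le hci.1]
    exact_mod_cast by omega
  · intro _
    rw [hB, stepSeq_of_lt (by omega)]
    exact_mod_cast by omega
  · intro _
    rw [hB', stepSeq_of_le hcj.1]
    exact_mod_cast by omega
  · intro _
    rw [hB', stepSeq_of_lt (by omega)]
    exact_mod_cast by omega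

lemma case2a_offsets {n α t : ℤ} {σ : ℝ} (heven : Even (n + α))
    (ht : σ + ((n : ℝ) + α + 1) / 2 = t) (htodd : Odd t) :
    ∃ e e' : ℤ, σ - ((n : ℝ) + α) / 2 - 1 / 2 = 2 * e ∧
      -σ - ((n : ℝ) + α) / 2 + 1 / 2 = 2 * e' := by
  obtain ⟨d, hd⟩ := heven
  obtain ⟨u, hu⟩ := htodd
  have hd' : (n : ℝ) + α = 2 * d := by exact_mod_cast (show n + α = 2 * d by omega)
  have hu' : (t : ℝ) = 2 * u + 1 := by exact_mod_cast hu
  refine ⟨u - d, -u, ?_, ?_⟩ <;> push_cast <;> linarith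

theorem stmt9_general (n α : ℤ) (heven : Even (n + α))
    (σ : ℝ)
    (t : ℤ) (ht : σ + ((n : ℝ) + α + 1) / 2 = t) (htodd : Odd t) :
    (∀ i : ℤ, 0 ≤ i → i ≤ n / 2 → ∃ lam : ℤ → ℤ, LMem n α σ i i lam) ∧
    (∀ j : ℤ, 0 ≤ j → j + 1 ≤ (n + 1) / 2 → j ≤ n / 2 →
      ∃ lam : ℤ → ℤ, LMem n α σ (j + 1) j lam) := by
  obtain ⟨e, e', he, he'⟩ := case2a_offsets heven ht htodd
  constructor
  · intro i _ _
    exact ⟨_, lMem_stepSeq (c := 2 * i) he he' ⟨by omega, by omega⟩ ⟨by omega, by omega⟩⟩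
  · intro j _ _ _
    exact ⟨_, lMem_stepSeq (c := 2 * j + 1) he he' ⟨by omega, by omega⟩ ⟨by omega, by omega⟩⟩

/-- Case 2a: every L_{i,i} with 0 ≤ i ≤ k = ⌊n/2⌋ is nonempty, and
L_{j+1,j} is nonempty whenever (j+1,j) ∈ S(n). -/
theorem stmt9 (n α : ℤ) (hn : 2 ≤ n) (hα : 0 ≤ α ∧ α ≤ 3) (heven : Even (n + α))
    (σ : ℝ) (hσhalf : ∃ s : ℤ, σ + 1 / 2 = s)
    (t : ℤ) (ht : σ + ((n : ℝ) + α + 1) / 2 = t) (htodd : Odd t) :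
    (∀ i : ℤ, 0 ≤ i → i ≤ n / 2 → ∃ lam : ℤ → ℤ, LMem n α σ i i lam) ∧
    (∀ j : ℤ, 0 ≤ j → j + 1 ≤ (n + 1) / 2 → j ≤ n / 2 →
      ∃ lam : ℤ → ℤ, LMem n α σ (j + 1) j lam) :=
  stmt9_general n α heven σ t ht htodd
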